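/- arXiv:math/9903208 — 9 statements merged into one kernel-verified Lean document; each statement's English description precedes it below -/
import Mathlib

section
/- Let p ≡ 1 (mod 8) be a prime and let σ = a + bi ∈ ℤ[i] be a Gaussian integer with norm a² + b² = p. Then σ is a quadratic residue modulo its conjugate σ̄, i.e. there exists τ ∈ ℤ[i] with σ ≡ τ² (mod σ̄). -/
/-!
Since `σ + σ̄ = 2a`, we have `σ ≡ 2a (mod σ̄)`, and `σ̄` divides `σσ̄ = p`; so it suffices that
`2a` is a square modulo `p`. Here `(2/p) = 1` as `p ≡ 1 (mod 8)`, and for the odd part `m` of `a`,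
reciprocity gives `(m/p) = (p/m) = (b²/m) = 1` because `p = a² + b² ≡ b² (mod m)`.
-/

open scoped NumberTheorySymbols

theorem Int.not_dvd_of_sq_add_sq_eq_prime {p : ℕ} (hp : p.Prime) {a b : ℤ}
    (hab : a ^ 2 + b ^ 2 = p) : ¬(p : ℤ) ∣ a := by
  intro ha
  have hb : (p : ℤ) ∣ b := by
    refine (Nat.prime_iff_prime_int.mp hp).dvd_of_dvd_pow (n := 2) ?_
    rw [show b ^ 2 = p - a ^ 2 by linarith]
    exact dvd_sub dvd_rfl (dvd_pow ha two_ne_zero)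
  have hsq : (p : ℤ) ^ 2 ∣ a ^ 2 + b ^ 2 :=
    dvd_add (pow_dvd_pow_of_dvd ha 2) (pow_dvd_pow_of_dvd hb 2)
  rw [hab] at hsq
  have := Nat.le_of_dvd hp.pos (by exact_mod_cast hsq)
  nlinarith [hp.two_le]

theorem jacobiSym.at_two_of_mod_eight_eq_one {n : ℕ} (hn : n % 8 = 1) : J(2 | n) = 1 := by
  rw [jacobiSym.at_two (Nat.odd_iff.mpr (by omega)), ZMod.χ₈_nat_mod_eight, hn]
  decide

theorem jacobiSym.eq_one_of_dvd_of_sq_add_sq {n m : ℕ} (hn : n % 4 = 1) (hm : Odd m)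
    (hmn : m.Coprime n) {a b : ℤ} (hma : (m : ℤ) ∣ a) (hab : a ^ 2 + b ^ 2 = n) :
    J(m | n) = 1 := by
  have hrec : J(m | n) = J(b ^ 2 | m) := by
    rw [← jacobiSym.quadratic_reciprocity_one_mod_four hn hm]
    refine jacobiSym.mod_left' (Int.modEq_iff_dvd.mpr ?_)
    rw [show b ^ 2 - n = -a ^ 2 by linarith]
    exact (dvd_pow hma two_ne_zero).neg_right
  have hne : J(m | n) ≠ 0 := by
    rw [Ne, jacobiSym.eq_zero_iff, Int.gcd_natCast_natCast]
    exact fun h => h.2 hmn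
  rw [hrec, jacobiSym.pow_left] at hne ⊢
  rcases jacobiSym.trichotomy b m with h | h | h <;> simp_all

theorem jacobiSym.eq_one_of_sq_add_sq_eq_prime {p : ℕ} (hp : p.Prime) (h8 : p % 8 = 1)
    {a b : ℤ} (hab : a ^ 2 + b ^ 2 = p) : J(a | p) = 1 := by
  have hpa := Int.not_dvd_of_sq_add_sq_eq_prime hp hab
  have hodd : Odd p := Nat.odd_iff.mpr (by omega)
  obtain ⟨k, m, hm, hkm⟩ := Nat.exists_eq_two_pow_mul_odd (n := a.natAbs)
    (Int.natAbs_ne_zero.mpr fun h => hpa (h ▸ dvd_zero _))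
  have hma : (m : ℤ) ∣ a := Int.natCast_dvd.mpr (Dvd.intro_left _ hkm.symm)
  have hmp : m.Coprime p := ((hp.coprime_iff_not_dvd).mpr fun h =>
    hpa ((Int.natCast_dvd_natCast.mpr h).trans hma)).symm
  have habs : J(a.natAbs | p) = 1 := by
    rw [hkm]
    push_cast
    rw [jacobiSym.mul_left, jacobiSym.pow_left, jacobiSym.at_two_of_mod_eight_eq_one h8,
      jacobiSym.eq_one_of_dvd_of_sq_add_sq (by omega) hm hmp hma hab, one_pow, one_mul]
  rcases Int.natAbs_eq a with ha | ha <;> rw [ha]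
  · exact habs
  · rw [jacobiSym.neg _ hodd, ZMod.χ₄_nat_one_mod_four (by omega), habs, one_mul]

theorem ZMod.exists_sq_dvd_sub_of_isSquare {n : ℕ} {x : ℤ} (h : IsSquare (x : ZMod n)) :
    ∃ t : ℤ, (n : ℤ) ∣ t ^ 2 - x := by
  obtain ⟨s, hs⟩ := h
  refine ⟨s.cast, (ZMod.intCast_eq_intCast_iff_dvd_sub _ _ _).mp ?_⟩
  push_cast [ZMod.intCast_zmod_cast]
  rw [hs, sq]

theorem Zsqrtd.star_dvd_sub_two_re {d : ℤ} (z : ℤ√d) : star z ∣ z - 2 * z.re :=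
  Dvd.intro (-1) (by ext <;> simp; ring)

theorem Zsqrtd.star_dvd_norm {d : ℤ} (z : ℤ√d) : star z ∣ (z.norm : ℤ√d) :=
  Dvd.intro_left z (Zsqrtd.norm_eq_mul_conj z).symm

/-- If `p ≡ 1 (mod 8)` is prime and `σ = a + bi ∈ ℤ[i]` has norm `a² + b² = p`, then `σ` is a
square modulo its conjugate `σ̄`. -/
theorem stmt0 (p : ℕ) (hp : p.Prime) (h8 : p % 8 = 1) (a b : ℤ)
    (hnorm : a ^ 2 + b ^ 2 = (p : ℤ)) :
    ∃ τ : Zsqrtd (-1), star (⟨a, b⟩ : Zsqrtd (-1)) ∣ (⟨a, b⟩ : Zsqrtd (-1)) - τ ^ 2 := by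
  have : Fact p.Prime := ⟨hp⟩
  set σ : Zsqrtd (-1) := ⟨a, b⟩
  have h2a : J(2 * a | p) = 1 := by
    rw [jacobiSym.mul_left, jacobiSym.at_two_of_mod_eight_eq_one h8,
      jacobiSym.eq_one_of_sq_add_sq_eq_prime hp h8 hnorm, one_mul]
  obtain ⟨t, ht⟩ := ZMod.exists_sq_dvd_sub_of_isSquare (ZMod.isSquare_of_jacobiSym_eq_one h2a)
  have hσp : star σ ∣ ((p : ℤ) : Zsqrtd (-1)) := by
    have hσ : σ.norm = p := by rw [Zsqrtd.norm_def]; linear_combination hnorm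
    exact hσ ▸ Zsqrtd.star_dvd_norm σ
  refine ⟨t, ?_⟩
  have hsplit :
      σ - (t : Zsqrtd (-1)) ^ 2 = (σ - 2 * σ.re) - ((t ^ 2 - 2 * a : ℤ) : Zsqrtd (-1)) := by
    push_cast
    ring
  rw [hsplit]
  exact dvd_sub (Zsqrtd.star_dvd_sub_two_re σ) (hσp.trans (Int.cast_dvd_cast _ _ ht))
end

section
/- Let p ≡ 1 (mod 8) be a prime and write p = e² - 2f² with e, f ∈ ℤ, so that π = e + f√2 ∈ ℤ[√2] is a prime of norm p with π ≡ 1 (mod 2ℤ[√2]). Then the quadratic residue symbol [π/π̄] equals the rational biquadratic symbol (2/p)₄. -/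
/-!
Reduction modulo `π̄ = e - f√2` identifies `ℤ[√2]/(π̄)` with `𝔽_p`, sending `√2` to `e/f` and
`π = 2e - π̄` to `2e`; hence `[π/π̄] = (2e/p) = (e/p)`. On the other hand `x ≡ ±e/f (mod p)`, so
`(x/p) = (e/p)(f/p)`, and `(f/p) = 1`: writing `|f| = 2^k m` with `m` odd, `(2/p) = 1` and
reciprocity give `(m/p) = (p/m) = (e²/m) = 1`, because `p ≡ e² (mod m)` and `gcd(e, m) = 1`.
-/

open Classical in
/-- The quadratic residue symbol `[α/π]`: `1` if `α` is a square modulo `π`, `-1` otherwise. -/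
noncomputable def qr {R : Type*} [CommRing R] (α π : R) : ℤ :=
  if ∃ τ : R, π ∣ α - τ ^ 2 then 1 else -1

section NormForm

variable {d e f : ℤ} {p : ℕ}

theorem Int.isCoprime_of_sq_sub_mul_sq_eq_prime (hp : p.Prime) (h : e ^ 2 - d * f ^ 2 = p) :
    IsCoprime e f := by
  rw [Int.isCoprime_iff_gcd_eq_one]
  have hsq : (e.gcd f : ℤ) * e.gcd f ∣ p := by
    rw [← h, ← sq]
    exact dvd_sub (pow_dvd_pow_of_dvd (Int.gcd_dvd_left e f) 2)
      ((pow_dvd_pow_of_dvd (Int.gcd_dvd_right e f) 2).mul_left d)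
  have := Int.isUnit_iff.mp ((Nat.prime_iff_prime_int.mp hp).squarefree _ hsq)
  omega

theorem Int.not_dvd_right_of_sq_sub_mul_sq_eq_prime (hp : p.Prime) (h : e ^ 2 - d * f ^ 2 = p) :
    ¬ (p : ℤ) ∣ f := by
  have hpZ := Nat.prime_iff_prime_int.mp hp
  intro hf
  have he : (p : ℤ) ∣ e := hpZ.dvd_of_dvd_pow (n := 2) <| by
    rw [show e ^ 2 = p + d * f ^ 2 by linarith]
    exact dvd_add dvd_rfl ((dvd_pow hf two_ne_zero).mul_left d)
  exact hpZ.not_isUnit ((Int.isCoprime_of_sq_sub_mul_sq_eq_prime hp h).isUnit_of_dvd' he hf)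

theorem ZMod.intCast_sq_eq_mul_sq_of_sq_sub_mul_sq_eq (h : e ^ 2 - d * f ^ 2 = p) :
    (e : ZMod p) ^ 2 = d * (f : ZMod p) ^ 2 := by
  have h' := congrArg (Int.cast : ℤ → ZMod p) h
  push_cast at h'
  rw [ZMod.natCast_self] at h'
  linear_combination h'

theorem ZMod.intCast_ne_zero_of_sq_sub_mul_sq_eq_prime (hp : p.Prime)
    (h : e ^ 2 - d * f ^ 2 = p) : (f : ZMod p) ≠ 0 := fun h0 =>
  Int.not_dvd_right_of_sq_sub_mul_sq_eq_prime hp h ((ZMod.intCast_zmod_eq_zero_iff_dvd f p).mp h0)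

end NormForm

namespace Zsqrtd

variable {d e f : ℤ} {p : ℕ}

theorem star_mk_dvd_of_sq_sub_mul_sq_eq (h : e ^ 2 - d * f ^ 2 = p) :
    star (⟨e, f⟩ : ℤ√d) ∣ ((p : ℤ) : ℤ√d) :=
  ⟨⟨e, f⟩, by rw [mul_comm, ← norm_eq_mul_conj, norm_def, ← h]; congr 1; ring⟩

theorem exists_ringHom_zmod_map_star_mk_eq_zero [Fact p.Prime] (h : e ^ 2 - d * f ^ 2 = p) :
    ∃ φ : ℤ√d →+* ZMod p, φ (star ⟨e, f⟩) = 0 := by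
  have hf := ZMod.intCast_ne_zero_of_sq_sub_mul_sq_eq_prime Fact.out h
  have hef := ZMod.intCast_sq_eq_mul_sq_of_sq_sub_mul_sq_eq h
  refine ⟨lift ⟨e / f, by field_simp; linear_combination hef⟩, ?_⟩
  simp [lift, star_mk, mul_div_cancel₀ _ hf]

theorem exists_star_mk_dvd_sub_sq_iff [Fact p.Prime] (h : e ^ 2 - d * f ^ 2 = p) :
    (∃ τ : ℤ√d, star ⟨e, f⟩ ∣ ⟨e, f⟩ - τ ^ 2) ↔ IsSquare ((2 * e : ℤ) : ZMod p) := by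
  have htrace : (⟨e, f⟩ : ℤ√d) = ((2 * e : ℤ) : ℤ√d) - star ⟨e, f⟩ := by
    ext <;> simp [star_mk, two_mul]
  constructor
  · rintro ⟨τ, c, hc⟩
    obtain ⟨φ, hφ⟩ := exists_ringHom_zmod_map_star_mk_eq_zero h
    refine ⟨φ τ, ?_⟩
    have hφπ : φ ⟨e, f⟩ = ((2 * e : ℤ) : ZMod p) := by
      rw [htrace, map_sub, hφ, map_intCast, sub_zero]
    have := congrArg φ hc
    rw [map_sub, map_pow, map_mul, hφ, zero_mul, sub_eq_zero, hφπ] at this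
    rw [this, sq]
  · rintro ⟨y, hy⟩
    set t : ℤ := (y.val : ℤ)
    have hdvd : (p : ℤ) ∣ 2 * e - t ^ 2 := (ZMod.intCast_zmod_eq_zero_iff_dvd _ p).mp <| by
      push_cast [t]
      rw [ZMod.natCast_zmod_val, sq, ← hy]
      push_cast
      ring
    refine ⟨(t : ℤ√d), ?_⟩
    rw [show (⟨e, f⟩ : ℤ√d) - t ^ 2 = ((2 * e - t ^ 2 : ℤ) : ℤ√d) - star ⟨e, f⟩ by
      nth_rw 1 [htrace]; push_cast; ring]
    exact dvd_sub
      ((star_mk_dvd_of_sq_sub_mul_sq_eq h).trans (map_dvd (Int.castRingHom _) hdvd)) dvd_rfl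

theorem qr_mk_star_eq_legendreSym [Fact p.Prime] (h : e ^ 2 - d * f ^ 2 = p)
    (h2e : ((2 * e : ℤ) : ZMod p) ≠ 0) :
    qr (⟨e, f⟩ : ℤ√d) (star ⟨e, f⟩) = legendreSym p (2 * e) := by
  rw [qr]
  split_ifs with hτ
  · exact ((legendreSym.eq_one_iff p h2e).mpr ((exists_star_mk_dvd_sub_sq_iff h).mp hτ)).symm
  · exact ((legendreSym.eq_neg_one_iff p).mpr (mt (exists_star_mk_dvd_sub_sq_iff h).mpr hτ)).symm

end Zsqrtd

section Legendre

variable {p : ℕ} [Fact p.Prime]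

theorem legendreSym_two_of_mod_eight_eq_one (h8 : p % 8 = 1) : legendreSym p 2 = 1 := by
  rw [legendreSym.at_two (by omega), ZMod.χ₈_nat_mod_eight, h8]
  rfl

theorem legendreSym_eq_of_sq_eq (hp4 : p % 4 = 1) {a b : ℤ}
    (h : (a : ZMod p) ^ 2 = (b : ZMod p) ^ 2) : legendreSym p a = legendreSym p b := by
  rcases sq_eq_sq_iff_eq_or_eq_neg.mp h with h | h
  · rw [legendreSym, h, ← legendreSym]
  · rw [legendreSym, h, ← Int.cast_neg, ← legendreSym, legendreSym.at_neg (by omega),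
      ZMod.χ₄_nat_one_mod_four hp4, one_mul]

end Legendre

theorem jacobiSym_natAbs_left {b : ℕ} (hb : b % 4 = 1) (a : ℤ) :
    jacobiSym a.natAbs b = jacobiSym a b := by
  obtain ⟨n, rfl | rfl⟩ := Int.eq_nat_or_neg a
  · rfl
  · rw [Int.natAbs_neg, Int.natAbs_natCast, jacobiSym.neg _ (Nat.odd_iff.mpr (by omega)),
      ZMod.χ₄_nat_one_mod_four hb, one_mul]

theorem jacobiSym_two_pow_mul {b : ℕ} (hb : b % 8 = 1) (k : ℕ) (a : ℤ) :
    jacobiSym (2 ^ k * a) b = jacobiSym a b := by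
  rw [jacobiSym.mul_left, jacobiSym.pow_left, jacobiSym.at_two (Nat.odd_iff.mpr (by omega)),
    ZMod.χ₈_nat_mod_eight, hb]
  simp

theorem legendreSym_eq_one_of_sq_sub_two_mul_sq_eq {p : ℕ} [Fact p.Prime] (h8 : p % 8 = 1)
    {e f : ℤ} (h : e ^ 2 - 2 * f ^ 2 = p) : legendreSym p f = 1 := by
  have hf : f.natAbs ≠ 0 := Int.natAbs_ne_zero.mpr <| by
    rintro rfl
    exact Int.not_dvd_right_of_sq_sub_mul_sq_eq_prime Fact.out h (dvd_zero _)
  obtain ⟨k, m, hm, hfm⟩ := Nat.exists_eq_two_pow_mul_odd hf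
  have hmf : (m : ℤ) ∣ f := Int.natCast_dvd.mpr ⟨2 ^ k, by rw [hfm, mul_comm]⟩
  have hem : e.gcd m = 1 := Int.isCoprime_iff_gcd_eq_one.mp
    ((Int.isCoprime_of_sq_sub_mul_sq_eq_prime Fact.out h).of_isCoprime_of_dvd_right hmf)
  calc legendreSym p f = jacobiSym f.natAbs p := by
        rw [jacobiSym.legendreSym.to_jacobiSym, jacobiSym_natAbs_left (by omega)]
    _ = jacobiSym m p := by
        rw [hfm]; push_cast; exact jacobiSym_two_pow_mul h8 k m
    _ = jacobiSym p m := jacobiSym.quadratic_reciprocity_one_mod_four' hm (by omega)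
    _ = jacobiSym (e ^ 2) m := jacobiSym.mod_left' <| Int.ModEq.symm <| Int.modEq_iff_dvd.mpr <| by
        rw [← h, sub_sub_cancel_left, dvd_neg]
        exact (dvd_pow hmf two_ne_zero).mul_left 2
    _ = 1 := jacobiSym.sq_one' hem

theorem stmt2_general (p : ℕ) (hp : p.Prime) (h8 : p % 8 = 1) (e f : ℤ)
    (hnorm : e ^ 2 - 2 * f ^ 2 = (p : ℤ))
    (x : ℤ) (hx : (x : ZMod p) ^ 2 = 2) :
    qr (⟨e, f⟩ : Zsqrtd 2) (star (⟨e, f⟩ : Zsqrtd 2)) = jacobiSym x p := by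
  have := Fact.mk hp
  have hef := ZMod.intCast_sq_eq_mul_sq_of_sq_sub_mul_sq_eq hnorm
  push_cast at hef
  have h2 : (2 : ZMod p) ≠ 0 := Ring.two_ne_zero (by rw [ZMod.ringChar_zmod_n]; omega)
  have hf := ZMod.intCast_ne_zero_of_sq_sub_mul_sq_eq_prime hp hnorm
  have h2e : ((2 * e : ℤ) : ZMod p) ≠ 0 := by
    intro h0
    push_cast at h0
    have he : (e : ZMod p) = 0 := (mul_eq_zero.mp h0).resolve_left h2
    rw [he, zero_pow two_ne_zero] at hef
    exact mul_ne_zero h2 (pow_ne_zero 2 hf) hef.symm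
  calc qr (⟨e, f⟩ : Zsqrtd 2) (star ⟨e, f⟩) = legendreSym p (2 * e) :=
        Zsqrtd.qr_mk_star_eq_legendreSym hnorm h2e
    _ = legendreSym p e := by rw [legendreSym.mul, legendreSym_two_of_mod_eight_eq_one h8, one_mul]
    _ = legendreSym p (f * x) := legendreSym_eq_of_sq_eq (by omega) <| by
        push_cast
        linear_combination hef - (f : ZMod p) ^ 2 * hx
    _ = jacobiSym x p := by
        rw [legendreSym.mul, legendreSym_eq_one_of_sq_sub_two_mul_sq_eq h8 hnorm, one_mul,
          jacobiSym.legendreSym.to_jacobiSym]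

/-- For a prime `p ≡ 1 (mod 8)` with `p = e² - 2f²`, `π = e + f√2 ≡ 1 (mod 2ℤ[√2])`,
the symbol `[π/π̄]` equals the rational biquadratic symbol `(2/p)₄`. -/
theorem stmt2 (p : ℕ) (hp : p.Prime) (h8 : p % 8 = 1) (e f : ℤ)
    (hnorm : e ^ 2 - 2 * f ^ 2 = (p : ℤ))
    (hcong : (2 : Zsqrtd 2) ∣ (⟨e, f⟩ : Zsqrtd 2) - 1)
    (x : ℤ) (hx : (x : ZMod p) ^ 2 = 2) :
    qr (⟨e, f⟩ : Zsqrtd 2) (star (⟨e, f⟩ : Zsqrtd 2)) = jacobiSym x p :=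
  stmt2_general p hp h8 e f hnorm x hx
end

section
/- Let p, q ≡ 1 (mod 8) be distinct primes and let π = a + b√2, λ = c + d√2 ∈ ℤ[√2] have norms p and q respectively, with π ≡ λ ≡ 1 (mod 2). Then the quadratic residue symbols satisfy the reciprocity law [π/λ] = [λ/π]. -/
/-! Reducing modulo `λ = c + d√2`, of prime norm `q`, is the ring map `ℤ[√2] → ZMod q`
sending `√2 ↦ -c/d`; it sends `π = a + b√2` to `(ad - bc)/d`, so `[π/λ] = ((ad - bc)d / q)`.
Because `q = c² - 2d²` with `q ≡ 1 (mod 8)`, reciprocity for the Jacobi symbol gives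
`(d/q) = 1`, so `[π/λ] = (f/q)` with `f = ad - bc`, and symmetrically `[λ/π] = (-f/p) = (f/p)`.
The identity `pq = (ac - 2bd)² - 2f²`, with coprime entries, gives in the same way
`(f/p)(f/q) = (f/pq) = 1`. -/

lemma isSquare_mul_sq_iff {K : Type*} [CommGroupWithZero K] {x y : K} (hy : y ≠ 0) :
    IsSquare (x * y ^ 2) ↔ IsSquare x :=
  ⟨fun h => by simpa [hy] using h.div (IsSquare.sq y), fun h => h.mul (IsSquare.sq y)⟩

lemma legendreSym_eq_ite {p : ℕ} [Fact p.Prime] {a : ℤ} (ha : (a : ZMod p) ≠ 0) :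
    legendreSym p a = if IsSquare (a : ZMod p) then 1 else -1 := by
  split_ifs with h
  · exact (legendreSym.eq_one_iff p ha).mpr h
  · exact (legendreSym.eq_neg_one_iff p).mpr h

lemma jacobiSym_neg_left {N : ℕ} (hN : N % 4 = 1) (a : ℤ) :
    jacobiSym (-a) N = jacobiSym a N := by
  rw [neg_eq_neg_one_mul, jacobiSym.mul_left, jacobiSym.at_neg_one (Nat.odd_iff.mpr (by omega)),
    ZMod.χ₄_nat_one_mod_four hN, one_mul]

section NormForm

variable {R : Type*} [CommRing R] {D e f n : R}

lemma isCoprime_of_sq_sub_mul_sq_eq_squarefree [IsDomain R] [IsPrincipalIdealRing R]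
    (h : e ^ 2 - D * f ^ 2 = n) (hn : Squarefree n) : IsCoprime e f := by
  refine isCoprime_of_prime_dvd ?_ fun r hr hre hrf => hr.not_isUnit (hn r ?_)
  · rintro ⟨rfl, rfl⟩
    rw [← h] at hn
    simp at hn
  · rw [← h, sq, sq]
    exact dvd_sub (mul_dvd_mul hre hre) (dvd_mul_of_dvd_right (mul_dvd_mul hrf hrf) D)

lemma Prime.not_dvd_of_sq_sub_mul_sq_eq {r : R} (hr : Prime r) (hrn : r ∣ n)
    (h : e ^ 2 - D * f ^ 2 = n) (hcop : IsCoprime e f) : ¬ r ∣ f := by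
  intro hrf
  have hre : r ∣ e := hr.dvd_of_dvd_pow (n := 2) <| by
    rw [show e ^ 2 = n + D * f ^ 2 by rw [← h]; ring]
    exact dvd_add hrn (dvd_mul_of_dvd_right (dvd_pow hrf two_ne_zero) D)
  exact hr.not_isUnit (hcop.isUnit_of_dvd' hre hrf)

end NormForm

lemma jacobiSym_eq_one_of_sq_sub_two_mul_sq_eq {N : ℕ} (hN : N % 8 = 1) {e f : ℤ}
    (h : e ^ 2 - 2 * f ^ 2 = N) (hcop : IsCoprime e f) : jacobiSym f N = 1 := by
  rcases eq_or_ne f 0 with rfl | hf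
  · have hN1 : N = 1 := by
      have := Int.isUnit_sq (isCoprime_zero_right.mp hcop)
      omega
    rw [hN1, jacobiSym.one_right]
  obtain ⟨k, m, hm, hfm⟩ := Nat.exists_eq_two_pow_mul_odd (Int.natAbs_ne_zero.mpr hf)
  have hmf : (m : ℤ) ∣ f := Int.natCast_dvd.mpr (hfm ▸ dvd_mul_left m _)
  have hNm : (N : ℤ) ≡ e ^ 2 [ZMOD m] :=
    Int.modEq_iff_dvd.mpr <| by
      rw [show e ^ 2 - N = 2 * f ^ 2 by rw [← h]; ring]
      exact (hmf.trans (dvd_pow_self f two_ne_zero)).mul_left 2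
  have h2 : jacobiSym 2 N = 1 := by
    rw [jacobiSym.at_two (Nat.odd_iff.mpr (by omega)), ZMod.χ₈_nat_eq_if_mod_eight]
    simp [hN, show N % 2 = 1 by omega]
  calc jacobiSym f N = jacobiSym |f| N := by
        rcases abs_choice f with h | h <;> rw [h]
        rw [jacobiSym_neg_left (by omega)]
    _ = jacobiSym m N := by
        rw [← Int.natCast_natAbs, hfm]; push_cast
        rw [jacobiSym.mul_left, jacobiSym.pow_left, h2, one_pow, one_mul]
    _ = jacobiSym N m := jacobiSym.quadratic_reciprocity_one_mod_four' hm (by omega)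
    _ = jacobiSym (e ^ 2) m := jacobiSym.mod_left' hNm
    _ = 1 :=
        jacobiSym.sq_one' (Int.isCoprime_iff_gcd_eq_one.mp (hcop.of_isCoprime_of_dvd_right hmf))

lemma Zsqrtd.dvd_iff_dvd_mul_sub {D c d x y q : ℤ} (hq : Prime q) (hla : c ^ 2 - D * d ^ 2 = q)
    (hd : ¬ q ∣ d) : (⟨c, d⟩ : ℤ√D) ∣ ⟨x, y⟩ ↔ q ∣ x * d - y * c := by
  constructor
  · rintro ⟨⟨u, v⟩, huv⟩
    obtain ⟨rfl, rfl⟩ : x = c * u + D * d * v ∧ y = c * v + d * u := by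
      simpa [Zsqrtd.ext_iff] using huv
    exact ⟨-v, by linear_combination -v * hla⟩
  · rintro ⟨v, hv⟩
    obtain ⟨u, hu⟩ : q ∣ x * c - D * y * d := by
      refine (hq.dvd_mul.mp ⟨c * v + y, ?_⟩).resolve_left hd
      linear_combination c * hv + y * hla
    have hq0 : q ≠ 0 := hq.ne_zero
    refine ⟨⟨u, -v⟩, Zsqrtd.ext ?_ ?_⟩
    · apply mul_left_cancel₀ hq0
      simp only [Zsqrtd.re_mul]
      linear_combination c * hu - D * d * hv - x * hla
    · apply mul_left_cancel₀ hq0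
      simp only [Zsqrtd.im_mul]
      linear_combination - c * hv + d * hu - y * hla

open Classical in
lemma qr_eq_ite_isSquare {R S : Type*} [CommRing R] [CommRing S] {φ : R →+* S}
    (hφ : Function.Surjective φ) {π : R} (hker : ∀ x, φ x = 0 ↔ π ∣ x) (α : R) :
    qr α π = if IsSquare (φ α) then 1 else -1 := by
  have hsq : (∃ τ, π ∣ α - τ ^ 2) ↔ IsSquare (φ α) := by
    simp only [← hker, map_sub, map_pow, sub_eq_zero, isSquare_iff_exists_sq, hφ.exists]
  simp only [qr, hsq]

lemma Zsqrtd.exists_ringHom_zmod {D c d : ℤ} {q : ℕ} [Fact q.Prime]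
    (hla : c ^ 2 - D * d ^ 2 = q) (hd : ¬ (q : ℤ) ∣ d) :
    ∃ φ : ℤ√D →+* ZMod q, (∀ β, φ β = 0 ↔ (⟨c, d⟩ : ℤ√D) ∣ β) ∧
      ∀ x y : ℤ, φ ⟨x, y⟩ * d = x * d - y * c := by
  have hd0 : (d : ZMod q) ≠ 0 := by rwa [Ne, ZMod.intCast_zmod_eq_zero_iff_dvd]
  have hw : (-c / d : ZMod q) * (-c / d) = D := by
    have hla' := congrArg (Int.cast : ℤ → ZMod q) hla
    push_cast at hla'
    rw [ZMod.natCast_self] at hla'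
    field_simp
    linear_combination hla'
  let φ : ℤ√D →+* ZMod q := Zsqrtd.lift ⟨-c / d, hw⟩
  have hφ : ∀ x y : ℤ, φ ⟨x, y⟩ * d = x * d - y * c := fun x y => by
    simp only [φ, Zsqrtd.lift_apply_apply]
    field_simp
    ring
  refine ⟨φ, fun ⟨x, y⟩ => ?_, hφ⟩
  rw [Zsqrtd.dvd_iff_dvd_mul_sub (Nat.prime_iff_prime_int.mp Fact.out) hla hd,
    ← ZMod.intCast_zmod_eq_zero_iff_dvd, ← mul_left_inj' hd0, zero_mul, hφ]
  push_cast
  rfl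

lemma Zsqrtd.qr_eq_legendreSym {D a b c d : ℤ} {q : ℕ} [Fact q.Prime]
    (hla : c ^ 2 - D * d ^ 2 = q) (hf : ¬ (q : ℤ) ∣ a * d - b * c) :
    qr (⟨a, b⟩ : ℤ√D) ⟨c, d⟩ = legendreSym q ((a * d - b * c) * d) := by
  have hq : Prime (q : ℤ) := Nat.prime_iff_prime_int.mp Fact.out
  have hd : ¬ (q : ℤ) ∣ d := hq.not_dvd_of_sq_sub_mul_sq_eq dvd_rfl hla
    (isCoprime_of_sq_sub_mul_sq_eq_squarefree hla hq.squarefree)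
  obtain ⟨φ, hker, hφ⟩ := Zsqrtd.exists_ringHom_zmod hla hd
  have hsurj : Function.Surjective φ := fun z => by
    obtain ⟨n, rfl⟩ := ZMod.intCast_surjective z
    exact ⟨n, map_intCast φ n⟩
  have hd0 : (d : ZMod q) ≠ 0 := by rwa [Ne, ZMod.intCast_zmod_eq_zero_iff_dvd]
  have hf0 : ((a * d - b * c : ℤ) : ZMod q) ≠ 0 := by
    rwa [Ne, ZMod.intCast_zmod_eq_zero_iff_dvd]
  have hval : (((a * d - b * c) * d : ℤ) : ZMod q) = φ ⟨a, b⟩ * (d : ZMod q) ^ 2 := by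
    rw [sq, ← mul_assoc, hφ]
    push_cast
    ring
  have hfd0 : (((a * d - b * c) * d : ℤ) : ZMod q) ≠ 0 := by
    rw [Int.cast_mul]
    exact mul_ne_zero hf0 hd0
  rw [qr_eq_ite_isSquare hsurj hker, legendreSym_eq_ite hfd0]
  simp only [hval, isSquare_mul_sq_iff hd0]
  -- the two sides differ only in their `Decidable` instances
  congr

lemma Zsqrtd.qr_eq_jacobiSym {a b c d : ℤ} {q : ℕ} [Fact q.Prime] (hq8 : q % 8 = 1)
    (hla : c ^ 2 - 2 * d ^ 2 = q) (hf : ¬ (q : ℤ) ∣ a * d - b * c) :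
    qr (⟨a, b⟩ : ℤ√2) ⟨c, d⟩ = jacobiSym (a * d - b * c) q := by
  have hcop : IsCoprime c d := isCoprime_of_sq_sub_mul_sq_eq_squarefree hla
    (Int.squarefree_natCast.mpr (Fact.out : q.Prime).prime.squarefree)
  rw [Zsqrtd.qr_eq_legendreSym hla hf, jacobiSym.legendreSym.to_jacobiSym, jacobiSym.mul_left,
    jacobiSym_eq_one_of_sq_sub_two_mul_sq_eq hq8 hla hcop, mul_one]

theorem stmt3_general (p q : ℕ) (hp : p.Prime) (hq : q.Prime) (hpq : p ≠ q)
    (hp8 : p % 8 = 1) (hq8 : q % 8 = 1) (a b c d : ℤ)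
    (hpi : a ^ 2 - 2 * b ^ 2 = (p : ℤ)) (hla : c ^ 2 - 2 * d ^ 2 = (q : ℤ)) :
    qr (⟨a, b⟩ : Zsqrtd 2) (⟨c, d⟩ : Zsqrtd 2) = qr (⟨c, d⟩ : Zsqrtd 2) (⟨a, b⟩ : Zsqrtd 2) := by
  have := Fact.mk hp
  have := Fact.mk hq
  set f := a * d - b * c
  have hnorm : (a * c - 2 * b * d) ^ 2 - 2 * f ^ 2 = ((p * q : ℕ) : ℤ) := by
    push_cast
    linear_combination (c ^ 2 - 2 * d ^ 2) * hpi + (p : ℤ) * hla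
  have hcop : IsCoprime (a * c - 2 * b * d) f :=
    isCoprime_of_sq_sub_mul_sq_eq_squarefree hnorm <| Int.squarefree_natCast.mpr <|
      Nat.squarefree_mul_iff.mpr ⟨(Nat.coprime_primes hp hq).mpr hpq, hp.prime.squarefree,
        hq.prime.squarefree⟩
  have hpf : ¬ (p : ℤ) ∣ f := (Nat.prime_iff_prime_int.mp hp).not_dvd_of_sq_sub_mul_sq_eq
    (Int.natCast_dvd_natCast.mpr (dvd_mul_right p q)) hnorm hcop
  have hqf : ¬ (q : ℤ) ∣ f := (Nat.prime_iff_prime_int.mp hq).not_dvd_of_sq_sub_mul_sq_eq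
    (Int.natCast_dvd_natCast.mpr (dvd_mul_left q p)) hnorm hcop
  have hJ : jacobiSym f p * jacobiSym f q = 1 := by
    rw [← jacobiSym.mul_right]
    exact jacobiSym_eq_one_of_sq_sub_two_mul_sq_eq (by rw [Nat.mul_mod, hp8, hq8]) hnorm hcop
  have hswap : c * b - d * a = -f := by ring
  rw [Zsqrtd.qr_eq_jacobiSym hq8 hla hqf,
    Zsqrtd.qr_eq_jacobiSym hp8 hpi (by rwa [hswap, dvd_neg]), hswap, jacobiSym_neg_left (by omega)]
  exact (Int.eq_of_mul_eq_one hJ).symm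

/-- Reciprocity in `ℤ[√2]`: for distinct primes `p, q ≡ 1 (mod 8)` and `π = a + b√2`,
`λ = c + d√2` of norms `p`, `q` with `π ≡ λ ≡ 1 (mod 2)`, one has `[π/λ] = [λ/π]`. -/
theorem stmt3 (p q : ℕ) (hp : p.Prime) (hq : q.Prime) (hpq : p ≠ q)
    (hp8 : p % 8 = 1) (hq8 : q % 8 = 1) (a b c d : ℤ)
    (hpi : a ^ 2 - 2 * b ^ 2 = (p : ℤ)) (hla : c ^ 2 - 2 * d ^ 2 = (q : ℤ))
    (h1 : (2 : Zsqrtd 2) ∣ (⟨a, b⟩ : Zsqrtd 2) - 1)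
    (h2 : (2 : Zsqrtd 2) ∣ (⟨c, d⟩ : Zsqrtd 2) - 1) :
    qr (⟨a, b⟩ : Zsqrtd 2) (⟨c, d⟩ : Zsqrtd 2) = qr (⟨c, d⟩ : Zsqrtd 2) (⟨a, b⟩ : Zsqrtd 2) :=
  stmt3_general p q hp hq hpq hp8 hq8 a b c d hpi hla
end

section
/- Let p, q ≡ 1 (mod 8) be distinct primes, π = a + b√2 and λ = c + d√2 elements of ℤ[√2] of norms p and q. Write ad - bc = 2ʲe with e odd. Then the Jacobi symbol (ad - bc / pq) = 1. -/
/-- For distinct primes `p, q ≡ 1 (mod 8)` and `π = a + b√2`, `λ = c + d√2` of norms `p`, `q`,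
writing `ad - bc = 2ʲe` with `e` odd, the Jacobi symbol `(ad - bc / pq)` equals `1`. -/
theorem stmt4 (p q : ℕ) (hp : p.Prime) (hq : q.Prime) (hpq : p ≠ q)
    (hp8 : p % 8 = 1) (hq8 : q % 8 = 1) (a b c d e : ℤ) (j : ℕ)
    (hpi : a ^ 2 - 2 * b ^ 2 = (p : ℤ)) (hla : c ^ 2 - 2 * d ^ 2 = (q : ℤ))
    (hdecomp : a * d - b * c = 2 ^ j * e) (he : Odd e) :
    jacobiSym (a * d - b * c) (p * q) = 1 := by
  set N := p * q with hN
  set K : ℤ := a * d - b * c with hK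
  set M : ℤ := a * c - 2 * b * d with hM
  have hN8 : N % 8 = 1 := by rw [hN, Nat.mul_mod, hp8, hq8]
  have hNodd : Odd N := by
    rcases Nat.even_or_odd N with h | h
    · exfalso; obtain ⟨k, hk⟩ := h; omega
    · exact h
  have hN4 : N % 4 = 1 := by omega
  -- key identity
  have hkey : ((N : ℤ)) = M ^ 2 - 2 * K ^ 2 := by
    have : (N : ℤ) = (p : ℤ) * q := by push_cast [hN]; ring
    rw [this, ← hpi, ← hla, hM, hK]; ring
  -- coprimality of M and e
  have hcop : Nat.Coprime M.natAbs e.natAbs := by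
    by_contra hg
    obtain ⟨r, hr, hrM, hre⟩ := Nat.Prime.not_coprime_iff_dvd.mp hg
    have hrMz : (r : ℤ) ∣ M := dvd_trans (Int.ofNat_dvd.mpr hrM) (Int.natAbs_dvd.mpr dvd_rfl)
    have hrez : (r : ℤ) ∣ e := dvd_trans (Int.ofNat_dvd.mpr hre) (Int.natAbs_dvd.mpr dvd_rfl)
    have hrK : (r : ℤ) ∣ K := hdecomp ▸ Dvd.dvd.mul_left hrez _
    have hrN : (r : ℤ) ∣ (N : ℤ) := by
      rw [hkey]
      exact dvd_sub (hrMz.pow two_ne_zero) ((hrK.pow two_ne_zero).mul_left 2)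
    have hrNn : r ∣ N := Int.ofNat_dvd.mp hrN
    have hrp : (r : ℤ).natAbs.Prime := by simpa using hr
    rcases (Nat.Prime.dvd_mul hr).mp hrNn with h | h
    · have hrp' : r = p := ((Nat.prime_dvd_prime_iff_eq hr hp).mp h)
      subst hrp'
      have h1 : (r : ℤ) ∣ b * q := by
        have : b * (q : ℤ) = d * M - c * K := by rw [hM, hK, ← hla]; ring
        rw [this]; exact dvd_sub (hrMz.mul_left d) (hrK.mul_left c)
      have h2 : (r : ℤ) ∣ a * q := by
        have : a * (q : ℤ) = c * M - 2 * d * K := by rw [hM, hK, ← hla]; ring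
        rw [this]; exact dvd_sub (hrMz.mul_left c) (hrK.mul_left (2*d))
      have hnq : ¬ (r : ℤ) ∣ (q : ℤ) := by
        rw [Int.ofNat_dvd]
        exact fun h => hpq ((Nat.prime_dvd_prime_iff_eq hr hq).mp h)
      have hb : (r : ℤ) ∣ b := (Int.Prime.dvd_mul' hr h1).resolve_right hnq
      have ha : (r : ℤ) ∣ a := (Int.Prime.dvd_mul' hr h2).resolve_right hnq
      have hsq : (r : ℤ)^2 ∣ (r : ℤ) := by
        have h3 : (r : ℤ)^2 ∣ a ^ 2 - 2 * b ^ 2 :=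
          dvd_sub (pow_dvd_pow_of_dvd ha 2) ((pow_dvd_pow_of_dvd hb 2).mul_left 2)
        rwa [hpi] at h3
      have := Int.le_of_dvd (by exact_mod_cast hp.pos) hsq
      have h2r : 2 ≤ r := hr.two_le
      nlinarith [sq_nonneg ((r:ℤ) - 1)]
    · have hrq' : r = q := ((Nat.prime_dvd_prime_iff_eq hr hq).mp h)
      subst hrq'
      have h1 : (r : ℤ) ∣ d * p := by
        have : d * (p : ℤ) = b * M + a * K := by rw [hM, hK, ← hpi]; ring
        rw [this]; exact dvd_add (hrMz.mul_left b) (hrK.mul_left a)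
      have h2 : (r : ℤ) ∣ c * p := by
        have : c * (p : ℤ) = a * M + 2 * b * K := by rw [hM, hK, ← hpi]; ring
        rw [this]; exact dvd_add (hrMz.mul_left a) (hrK.mul_left (2*b))
      have hnp : ¬ (r : ℤ) ∣ (p : ℤ) := by
        rw [Int.ofNat_dvd]
        exact fun h => hpq ((Nat.prime_dvd_prime_iff_eq hr hp).mp h).symm
      have hd : (r : ℤ) ∣ d := (Int.Prime.dvd_mul' hr h1).resolve_right hnp
      have hc : (r : ℤ) ∣ c := (Int.Prime.dvd_mul' hr h2).resolve_right hnp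
      have hsq : (r : ℤ)^2 ∣ (r : ℤ) := by
        have h3 : (r : ℤ)^2 ∣ c ^ 2 - 2 * d ^ 2 :=
          dvd_sub (pow_dvd_pow_of_dvd hc 2) ((pow_dvd_pow_of_dvd hd 2).mul_left 2)
        rwa [hla] at h3
      have := Int.le_of_dvd (by exact_mod_cast hq.pos) hsq
      have h2r : 2 ≤ r := hr.two_le
      nlinarith [sq_nonneg ((r:ℤ) - 1)]
  -- now compute the Jacobi symbol
  set e' := e.natAbs with he'
  have heodd : Odd e' := Int.natAbs_odd.mpr he
  have hee : e ∣ K := hdecomp ▸ Dvd.dvd.mul_left dvd_rfl _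
  have hcong : ((N : ℤ)) % (e' : ℤ) = (M ^ 2) % (e' : ℤ) := by
    have hd : (e' : ℤ) ∣ M ^ 2 - (N : ℤ) := by
      rw [hkey]
      have : M ^ 2 - (M ^ 2 - 2 * K ^ 2) = 2 * K ^ 2 := by ring
      rw [this]
      exact Int.natAbs_dvd.mpr (Dvd.dvd.mul_left
        (dvd_trans (dvd_pow_self e two_ne_zero) (pow_dvd_pow_of_dvd hee 2)) 2)
    exact (Int.modEq_iff_dvd.mpr hd)
  have hJNe : jacobiSym (N : ℤ) e' = 1 := by
    rw [jacobiSym.mod_left, hcong, ← jacobiSym.mod_left]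
    apply jacobiSym.sq_one'
    rw [Int.gcd]
    simpa using hcop
  have hJeN : jacobiSym e N = 1 := by
    rcases Int.natAbs_eq e with h | h
    · rw [h]
      rw [show ((e' : ℤ)) = ((e' : ℕ) : ℤ) from rfl]
      rw [jacobiSym.quadratic_reciprocity_one_mod_four' heodd hN4]
      exact hJNe
    · rw [h, ← neg_one_mul, jacobiSym.mul_left, jacobiSym.at_neg_one hNodd,
        ZMod.χ₄_nat_one_mod_four hN4, one_mul,
        jacobiSym.quadratic_reciprocity_one_mod_four' heodd hN4]
      exact hJNe
  rw [hK] at hdecomp ⊢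
  rw [hdecomp, jacobiSym.mul_left, show ((2:ℤ)^j) = (2:ℤ)^j from rfl, jacobiSym.pow_left,
    jacobiSym.at_two hNodd, show ZMod.χ₈ (N : ZMod 8) = 1 by rw [ZMod.χ₈_nat_mod_eight, hN8]; rfl, one_pow, one_mul, hJeN]
end

section
/- Let p ≡ 9 (mod 16) be a prime. Then ((1+i)/p) = -(2/p)₄, where ((1+i)/p) is the quadratic residue symbol of 1+i modulo a Gaussian prime above p and (2/p)₄ is the biquadratic residue symbol of 2 mod p. Consequently, if ((1+i)/p) = +1 then (2/p)₄ = (-1)^((p-1)/8). -/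
/-- For a prime `p ≡ 9 (mod 16)`, `((1+i)/p) = -(2/p)₄`; consequently if `((1+i)/p) = 1` then
`(2/p)₄ = (-1)^((p-1)/8)`. Here `(2/p)₄ = (x/p)` for any `x` with `x² ≡ 2 (mod p)`. -/
theorem stmt7 (p : ℕ) (hp : p.Prime) (h16 : p % 16 = 9)
    (σ : Zsqrtd (-1)) (hσ : σ.norm = (p : ℤ)) (x : ℤ) (hx : (x : ZMod p) ^ 2 = 2) :
    qr (⟨1, 1⟩ : Zsqrtd (-1)) σ = -jacobiSym x p ∧
      (qr (⟨1, 1⟩ : Zsqrtd (-1)) σ = 1 → jacobiSym x p = (-1) ^ ((p - 1) / 8)) := by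
  haveI : Fact p.Prime := ⟨hp⟩
  haveI : Fact (2 < p) := ⟨by omega⟩
  obtain ⟨k, hk⟩ : ∃ k, p = 16 * k + 9 := ⟨p / 16, by omega⟩
  set a := σ.re with ha
  set b := σ.im with hb
  have hnorm : a * a + b * b = (p : ℤ) := by
    have := hσ; rwa [Zsqrtd.norm_def, show (-1 : ℤ) * b * b = -(b*b) by ring,
      sub_neg_eq_add] at this
  -- b is nonzero mod p
  have hab : (a : ZMod p) ^ 2 + (b : ZMod p) ^ 2 = 0 := by
    have : ((a * a + b * b : ℤ) : ZMod p) = ((p : ℤ) : ZMod p) := by rw [hnorm]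
    push_cast at this
    rw [ZMod.natCast_self] at this
    linear_combination this
  have hbz : (b : ZMod p) ≠ 0 := by
    intro h
    have haz : (a : ZMod p) = 0 := by
      have : (a : ZMod p) ^ 2 = 0 := by rw [h] at hab; linear_combination hab
      exact pow_eq_zero_iff (by norm_num) |>.mp this
    have hpa : (p : ℤ) ∣ a := (ZMod.intCast_zmod_eq_zero_iff_dvd a p).mp haz
    have hpb : (p : ℤ) ∣ b := (ZMod.intCast_zmod_eq_zero_iff_dvd b p).mp h
    have hdv : (p : ℤ) * p ∣ a * a + b * b := dvd_add (mul_dvd_mul hpa hpa) (mul_dvd_mul hpb hpb)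
    rw [hnorm] at hdv
    have hple := Int.le_of_dvd (by exact_mod_cast hp.pos) hdv
    nlinarith [hple, (show (3:ℤ) ≤ p by exact_mod_cast (show 3 ≤ p by omega))]
  -- the square root of -1 mod p
  set j : ZMod p := -(a : ZMod p) * (b : ZMod p)⁻¹ with hj
  have hj2 : j * j = -1 := by
    rw [hj]
    field_simp
    linear_combination hab
  set φ : Zsqrtd (-1) →+* ZMod p := Zsqrtd.lift ⟨j, by rw [hj2]; norm_num⟩ with hφ
  have hφval : ∀ z : Zsqrtd (-1), φ z = (z.re : ZMod p) + (z.im : ZMod p) * j := fun z => rfl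
  have hφσ : φ σ = 0 := by
    rw [hφval, hj]
    rw [← ha, ← hb]
    field_simp
    ring
  -- kernel characterization
  have hker : ∀ z : Zsqrtd (-1), σ ∣ z ↔ φ z = 0 := by
    intro z
    constructor
    · rintro ⟨w, rfl⟩
      rw [map_mul, hφσ, zero_mul]
    · intro h
      rw [hφval] at h
      set c := z.re; set d := z.im
      have h1 : (c : ZMod p) * (b : ZMod p) = (d : ZMod p) * (a : ZMod p) := by
        have := h
        rw [hj] at this
        field_simp at this
        linear_combination this
      have h2 : (p : ℤ) ∣ d * a - c * b := by
        rw [← ZMod.intCast_zmod_eq_zero_iff_dvd]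
        push_cast
        linear_combination -h1
      have h3 : (p : ℤ) ∣ c * a + d * b := by
        rw [← ZMod.intCast_zmod_eq_zero_iff_dvd]
        push_cast
        have hb2 : (b : ZMod p) * ((c : ZMod p) * (a : ZMod p) + (d : ZMod p) * (b : ZMod p)) = 0 := by
          linear_combination (a : ZMod p) * h1 + (d : ZMod p) * hab
        rcases mul_eq_zero.mp hb2 with h' | h'
        · exact absurd h' hbz
        · exact h'
      have hdvd : ((p : ℤ) : Zsqrtd (-1)) ∣ z * star σ := by
        rw [Zsqrtd.intCast_dvd]
        constructor
        · have : (z * star σ).re = c * a + d * b := by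
            simp [Zsqrtd.re_mul, Zsqrtd.re_star, Zsqrtd.im_star, ← ha, ← hb]
            try ring
          rw [this]; exact h3
        · have : (z * star σ).im = d * a - c * b := by
            simp [Zsqrtd.im_mul, Zsqrtd.re_star, Zsqrtd.im_star, ← ha, ← hb]
            try ring
          rw [this]; exact h2
      have hps : ((p : ℤ) : Zsqrtd (-1)) = σ * star σ := by
        rw [← hσ, Zsqrtd.norm_eq_mul_conj]
      rw [hps] at hdvd
      obtain ⟨w, hw⟩ := hdvd
      have hstar : (star σ : Zsqrtd (-1)) ≠ 0 := by
        intro h0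
        have : σ = 0 := by
          have := congrArg star h0
          simpa using this
        rw [this] at hσ
        simp [Zsqrtd.norm] at hσ
        have : (p : ℤ) ≠ 0 := by exact_mod_cast hp.pos.ne'
        exact this hσ.symm
      have : z = σ * w := by
        have hw' : star σ * z = star σ * (σ * w) := by
          rw [mul_comm (star σ) z, hw]; ring
        exact mul_left_cancel₀ hstar hw'
      exact ⟨w, this⟩
  -- qr ↔ IsSquare (1 + j)
  have hsq : (∃ τ : Zsqrtd (-1), σ ∣ (⟨1, 1⟩ : Zsqrtd (-1)) - τ ^ 2) ↔ IsSquare (1 + j) := by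
    constructor
    · rintro ⟨τ, hτ⟩
      refine ⟨φ τ, ?_⟩
      have := (hker _).mp hτ
      rw [map_sub, map_pow, sub_eq_zero, hφval] at this
      push_cast at this
      linear_combination this
    · rintro ⟨t, ht⟩
      refine ⟨((t.val : ℤ) : Zsqrtd (-1)), (hker _).mpr ?_⟩
      rw [map_sub, map_pow, sub_eq_zero]
      have hφt : φ ((t.val : ℤ) : Zsqrtd (-1)) = t := by
        rw [map_intCast]
        push_cast
        rw [ZMod.natCast_val, ZMod.cast_id]
      rw [hφt, hφval]
      simp [← ht, sq]
  -- Euler computations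
  have hx0 : (x : ZMod p) ≠ 0 := by
    intro h
    have h2 : ((2 : ℕ) : ZMod p) = 0 := by
      push_cast
      rw [← hx, h]
      ring
    have hdvd := (ZMod.natCast_eq_zero_iff 2 p).mp h2
    have := Nat.le_of_dvd (by norm_num) hdvd
    omega
  have hj1 : 1 + j ≠ 0 := by
    intro h
    have : j = -1 := by linear_combination h
    rw [this] at hj2
    simp at hj2
    exact ZMod.neg_one_ne_one (by linear_combination -hj2)
  have hpow : (1 + j) ^ (p / 2) = -((legendreSym p x : ℤ) : ZMod p) := by
    have hp2 : p / 2 = 8 * k + 4 := by omega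
    have h1j : (1 + j) ^ 2 = 2 * j := by ring_nf; linear_combination hj2
    calc (1 + j) ^ (p / 2) = ((1 + j) ^ 2) ^ (4 * k + 2) := by
          rw [hp2, show 8 * k + 4 = 2 * (4 * k + 2) from by ring, pow_mul]
      _ = (2 : ZMod p) ^ (4 * k + 2) * j ^ (4 * k + 2) := by rw [h1j, mul_pow]
      _ = ((x : ZMod p) ^ (p / 2)) * ((j * j) ^ (2 * k + 1)) := by
          have e1 : (j * j) ^ (2 * k + 1) = j ^ (4 * k + 2) := by
            rw [← pow_two, ← pow_mul]
            congr 1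
            ring
          have e2 : (x : ZMod p) ^ (8 * k + 4) = (2 : ZMod p) ^ (4 * k + 2) := by
            rw [show 8 * k + 4 = 2 * (4 * k + 2) from by ring, pow_mul, hx]
          rw [hp2, e2, e1]
      _ = -((legendreSym p x : ℤ) : ZMod p) := by
          rw [hj2, legendreSym.eq_pow]
          rw [show (-1 : ZMod p) ^ (2 * k + 1) = -1 from Odd.neg_one_pow ⟨k, by ring⟩]
          ring
  have hεcases := legendreSym.eq_one_or_neg_one p (a := x) hx0
  have hjac : jacobiSym x p = legendreSym p x := (jacobiSym.legendreSym.to_jacobiSym p x).symm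
  have h8 : ((-1 : ℤ)) ^ ((p - 1) / 8) = -1 := Odd.neg_one_pow ⟨k, by omega⟩
  have hqr : qr (⟨1, 1⟩ : Zsqrtd (-1)) σ = if IsSquare (1 + j) then 1 else -1 := by
    rw [qr]
    by_cases h : IsSquare (1 + j)
    · rw [if_pos (hsq.mpr h), if_pos h]
    · rw [if_neg (fun hc => h (hsq.mp hc)), if_neg h]
  rcases hεcases with hε | hε
  · -- legendre = 1, so (1+j)^(p/2) = -1, not a square
    have hns : ¬ IsSquare (1 + j) := by
      rw [ZMod.euler_criterion p hj1, hpow, hε]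
      intro h
      exact ZMod.neg_one_ne_one (by push_cast at h; linear_combination h)
    rw [hqr, if_neg hns, hjac, hε]
    exact ⟨by norm_num, by intro h; norm_num at h⟩
  · -- legendre = -1, so (1+j)^(p/2) = 1, square
    have hs : IsSquare (1 + j) := by
      rw [ZMod.euler_criterion p hj1, hpow, hε]
      push_cast
      ring
    rw [hqr, if_pos hs, hjac, hε, h8]
    exact ⟨by norm_num, fun _ => rfl⟩
end

section
/- Let k be a squarefree product of primes pⱼ ≡ 1 (mod 8) with (pᵢ/pⱼ) = 1 for i ≠ j, let k₁ | k with k₁ = κ₁κ̄₁ for κ₁ ∈ ℤ[√2]. If π and π' are two prime elements of ℤ[√2] of the same norm pⱼ (with pⱼ ∤ k₁), then the quadratic residue symbols [κ₁/π] and [κ₁/π'] are equal; i.e. [κ₁/π] depends only on pⱼ, not on the choice of prime above pⱼ. -/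
theorem exists_dvd_sub_sq_iff_isSquare {R S : Type*} [CommRing R] [CommRing S] {φ : R →+* S}
    (hφ : Function.Surjective φ) {π : R} (hker : ∀ x, π ∣ x ↔ φ x = 0) (α : R) :
    (∃ τ, π ∣ α - τ ^ 2) ↔ IsSquare (φ α) := by
  simp only [hker, map_sub, sub_eq_zero, sq, map_mul]
  constructor
  · rintro ⟨τ, h⟩
    exact ⟨φ τ, h⟩
  · rintro ⟨s, hs⟩
    obtain ⟨τ, rfl⟩ := hφ s
    exact ⟨τ, hs⟩

theorem isSquare_iff_of_isSquare_mul {G : Type*} [CommGroupWithZero G] {a b : G}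
    (hab : IsSquare (a * b)) (h0 : a * b ≠ 0) : IsSquare a ↔ IsSquare b :=
  ⟨fun ha => by simpa [left_ne_zero_of_mul h0] using hab.div ha,
    fun hb => by simpa [right_ne_zero_of_mul h0] using hab.div hb⟩

theorem Nat.isSquare_cast_of_forall_prime_dvd {R : Type*} [CommSemiring R] {n : ℕ}
    (h : ∀ q, q.Prime → q ∣ n → IsSquare (q : R)) : IsSquare (n : R) := by
  induction n using induction_on_primes with
  | zero => simp
  | one => simp
  | prime_mul q a hq ih =>
    push_cast
    exact (h q hq (dvd_mul_right q a)).mul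
      (ih fun r hr hra => h r hr (hra.mul_left q))

namespace Zsqrtd

variable {d : ℤ}

theorem norm_dvd_norm {a b : ℤ√d} (h : a ∣ b) : a.norm ∣ b.norm :=
  map_dvd normMonoidHom h

theorem self_dvd_norm (a : ℤ√d) : a ∣ (a.norm : ℤ√d) :=
  ⟨star a, norm_eq_mul_conj a⟩

theorem star_sqrtd : star (sqrtd : ℤ√d) = -sqrtd := by
  ext <;> simp

variable {p : ℕ} {π : ℤ√d}

theorem dvd_intCast_iff_of_norm_eq (hp : p.Prime) (hn : π.norm = p) {m : ℤ} :
    π ∣ (m : ℤ√d) ↔ (p : ℤ) ∣ m := by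
  refine ⟨fun h => ?_, fun h => ?_⟩
  · have hpm : (p : ℤ) ∣ m * m := by simpa [hn] using norm_dvd_norm h
    exact (Int.Prime.dvd_mul' hp hpm).elim id id
  · rw [← hn] at h
    exact (self_dvd_norm π).trans ((intCast_dvd_intCast _ _).2 h)

theorem not_dvd_im_of_norm_eq (hp : p.Prime) (hn : π.norm = p) : ¬(p : ℤ) ∣ π.im := by
  intro him
  have hre : (p : ℤ) ∣ π.re := by
    have hre2 : π.re * π.re = p + d * π.im * π.im := by rw [← hn, norm_def]; ring
    have : (p : ℤ) ∣ π.re * π.re := hre2 ▸ dvd_add dvd_rfl (him.mul_left _)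
    exact (Int.Prime.dvd_mul' hp this).elim id id
  have : (p : ℤ) * p ∣ π.norm := by
    rw [norm_def]
    exact dvd_sub (mul_dvd_mul hre hre) (mul_dvd_mul (him.mul_left d) him)
  have hp0 : (p : ℤ) ≠ 0 := by exact_mod_cast hp.ne_zero
  have hp1 : (p : ℤ) ∣ 1 := (mul_dvd_mul_iff_left hp0).mp (by simpa [hn] using this)
  exact hp.not_dvd_one (by exact_mod_cast hp1)

theorem exists_dvd_sqrtd_sub_intCast (hp : p.Prime) (hn : π.norm = p) :
    ∃ c : ℤ, π ∣ sqrtd - (c : ℤ√d) := by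
  obtain ⟨u, v, huv⟩ := (Nat.prime_iff_prime_int.mp hp).coprime_iff_not_dvd.2
    (not_dvd_im_of_norm_eq hp hn)
  -- `v` inverts `π.im` modulo `p`, and `√d + π.re * v = v * π + u * p * √d`.
  refine ⟨-π.re * v, ?_⟩
  have : sqrtd - ((-π.re * v : ℤ) : ℤ√d) = (v : ℤ√d) * π + ((u * p : ℤ) : ℤ√d) * sqrtd := by
    ext
    · simp [mul_comm]
    · simp only [im_sub, im_sqrtd, im_intCast, im_add, im_mul, re_intCast, re_sqrtd]
      linear_combination -huv
  rw [this]
  exact dvd_add (dvd_mul_left π _)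
    (((dvd_intCast_iff_of_norm_eq hp hn).2 (dvd_mul_left _ _)).mul_right _)

theorem dvd_sub_intCast_re_add_im_mul {c : ℤ} (hc : π ∣ sqrtd - (c : ℤ√d)) (α : ℤ√d) :
    π ∣ α - ((α.re + α.im * c : ℤ) : ℤ√d) := by
  have : α - ((α.re + α.im * c : ℤ) : ℤ√d) = (α.im : ℤ√d) * (sqrtd - (c : ℤ√d)) := by
    ext <;> simp
  exact this ▸ hc.mul_left _

theorem exists_ringHom_zmod_dvd_iff (hp : p.Prime) (hn : π.norm = p) :
    ∃ φ : ℤ√d →+* ZMod p, ∀ α, π ∣ α ↔ φ α = 0 := by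
  obtain ⟨c, hc⟩ := exists_dvd_sqrtd_sub_intCast hp hn
  have hc2 : (c : ZMod p) * c = d := by
    have : π ∣ ((d - c * c : ℤ) : ℤ√d) := by
      have : ((d - c * c : ℤ) : ℤ√d) = (sqrtd - (c : ℤ√d)) * (sqrtd + (c : ℤ√d)) := by
        ext
        · simp; ring
        · simp
      exact this ▸ hc.mul_right _
    rw [dvd_intCast_iff_of_norm_eq hp hn, ← ZMod.intCast_zmod_eq_zero_iff_dvd] at this
    push_cast at this
    linear_combination -this
  refine ⟨lift ⟨c, hc2⟩, fun α => ?_⟩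
  rw [dvd_iff_dvd_of_dvd_sub (dvd_sub_intCast_re_add_im_mul hc α),
    dvd_intCast_iff_of_norm_eq hp hn, ← ZMod.intCast_zmod_eq_zero_iff_dvd]
  simp

theorem ringHom_eq_or_eq_comp_star {R : Type*} [CommRing R] [IsDomain R] (φ ψ : ℤ√d →+* R) :
    ψ = φ ∨ ψ = φ.comp (starRingEnd (ℤ√d)) := by
  have h : ψ sqrtd * ψ sqrtd = φ sqrtd * φ sqrtd := by
    simp only [← map_mul, dmuld, map_intCast]
  rcases mul_self_eq_mul_self_iff.mp h with h | h
  · exact Or.inl (hom_ext _ _ h)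
  · exact Or.inr (hom_ext _ _ (by simp [h, starRingEnd_apply, star_sqrtd]))

end Zsqrtd

theorem stmt9_general (k : ℕ)
    (hleg : ∀ p q : ℕ, p.Prime → q.Prime → p ∣ k → q ∣ k → p ≠ q → jacobiSym p q = 1)
    (k₁ : ℕ) (hk₁ : k₁ ∣ k) (κ₁ : Zsqrtd 2) (hκ : κ₁ * star κ₁ = (k₁ : Zsqrtd 2))
    (p : ℕ) (hp : p.Prime) (hpk : p ∣ k) (hpk₁ : ¬p ∣ k₁)
    (π π' : Zsqrtd 2)
    (hn : π.norm = (p : ℤ)) (hn' : π'.norm = (p : ℤ)) :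
    qr κ₁ π = qr κ₁ π' := by
  have : Fact p.Prime := ⟨hp⟩
  obtain ⟨φ, hφ⟩ := Zsqrtd.exists_ringHom_zmod_dvd_iff hp hn
  obtain ⟨ψ, hψ⟩ := Zsqrtd.exists_ringHom_zmod_dvd_iff hp hn'
  suffices IsSquare (φ κ₁) ↔ IsSquare (ψ κ₁) by
    simp only [qr, exists_dvd_sub_sq_iff_isSquare (ZMod.ringHom_surjective φ) hφ,
      exists_dvd_sub_sq_iff_isSquare (ZMod.ringHom_surjective ψ) hψ, this]
  rcases Zsqrtd.ringHom_eq_or_eq_comp_star φ ψ with rfl | rfl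
  · rfl
  have hprod : φ κ₁ * φ (star κ₁) = k₁ := by rw [← map_mul, hκ, map_natCast]
  have hk₁_sq : IsSquare (k₁ : ZMod p) := Nat.isSquare_cast_of_forall_prime_dvd fun q hq hqk₁ => by
    exact_mod_cast ZMod.isSquare_of_jacobiSym_eq_one
      (hleg q p hq hp (hqk₁.trans hk₁) hpk (by rintro rfl; exact hpk₁ hqk₁))
  have hk₁_ne : (k₁ : ZMod p) ≠ 0 := by rwa [Ne, ZMod.natCast_eq_zero_iff]
  exact isSquare_iff_of_isSquare_mul (hprod ▸ hk₁_sq) (hprod ▸ hk₁_ne)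

/-- Let `k` be a squarefree product of primes `pⱼ ≡ 1 (mod 8)` with `(pᵢ/pⱼ) = 1` for `i ≠ j`,
and let `k₁ ∣ k` with `k₁ = κ₁κ̄₁`, `κ₁ ∈ ℤ[√2]`. If `π, π'` are primes of `ℤ[√2]` of the same
norm `p ∣ k` with `p ∤ k₁`, then `[κ₁/π] = [κ₁/π']`. -/
theorem stmt9 (k : ℕ) (hsq : Squarefree k)
    (h8 : ∀ p : ℕ, p.Prime → p ∣ k → p % 8 = 1)
    (hleg : ∀ p q : ℕ, p.Prime → q.Prime → p ∣ k → q ∣ k → p ≠ q → jacobiSym p q = 1)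
    (k₁ : ℕ) (hk₁ : k₁ ∣ k) (κ₁ : Zsqrtd 2) (hκ : κ₁ * star κ₁ = (k₁ : Zsqrtd 2))
    (p : ℕ) (hp : p.Prime) (hpk : p ∣ k) (hpk₁ : ¬p ∣ k₁)
    (π π' : Zsqrtd 2) (hπ : Prime π) (hπ' : Prime π')
    (hn : π.norm = (p : ℤ)) (hn' : π'.norm = (p : ℤ)) :
    qr κ₁ π = qr κ₁ π' :=
  stmt9_general k hleg k₁ hk₁ κ₁ hκ p hp hpk hpk₁ π π' hn hn'
end

section
/- Let l, m be odd coprime integers, k₃ odd, and e an integer such that lm is coprime to (1+i)k₃e. Then in ℤ[i] the elements lm² - (1+i)k₃e² and lm² - (1-i)k₃e² are coprime (their gcd is a unit). -/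
/-- If `l, m` are odd coprime integers, `k₃` is odd, `gcd(m, e) = 1` and `gcd(lm, k₃e) = 1`,
then in `ℤ[i]` the elements `lm² - (1+i)k₃e²` and `lm² - (1-i)k₃e²` are coprime: any common
divisor is a unit. -/
theorem stmt12 (l m k₃ e : ℤ) (hl : Odd l) (hm : Odd m) (hlm : IsCoprime l m) (hk₃ : Odd k₃)
    (hme : IsCoprime m e) (hco : IsCoprime (l * m) (k₃ * e)) :
    ∀ δ : Zsqrtd (-1),
      δ ∣ ((l * m ^ 2 : ℤ) : Zsqrtd (-1)) -
        (⟨1, 1⟩ : Zsqrtd (-1)) * (k₃ : Zsqrtd (-1)) * ((e : Zsqrtd (-1))) ^ 2 →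
      δ ∣ ((l * m ^ 2 : ℤ) : Zsqrtd (-1)) -
        (⟨1, -1⟩ : Zsqrtd (-1)) * (k₃ : Zsqrtd (-1)) * ((e : Zsqrtd (-1))) ^ 2 →
      IsUnit δ := by
  intro δ hA hB
  set A : Zsqrtd (-1) := ((l * m ^ 2 : ℤ) : Zsqrtd (-1)) -
    (⟨1, 1⟩ : Zsqrtd (-1)) * (k₃ : Zsqrtd (-1)) * ((e : Zsqrtd (-1))) ^ 2 with hAdef
  set B : Zsqrtd (-1) := ((l * m ^ 2 : ℤ) : Zsqrtd (-1)) -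
    (⟨1, -1⟩ : Zsqrtd (-1)) * (k₃ : Zsqrtd (-1)) * ((e : Zsqrtd (-1))) ^ 2 with hBdef
  have hmk : IsCoprime m k₃ := hco.of_mul_left_right.of_mul_right_left
  have h3 : IsCoprime (l * m * m) (k₃ * e) := hco.mul_left (hmk.mul_right hme)
  have h4 : IsCoprime (l * m * m) (k₃ * e * e) := h3.mul_right h3.of_mul_right_right
  obtain ⟨a, b, hab⟩ := h4
  have hX : δ ∣ (⟨0, 2⟩ : Zsqrtd (-1)) * ((l * m ^ 2 : ℤ) : Zsqrtd (-1)) := by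
    have h := dvd_add ((dvd_add hA hB).mul_left (⟨0, 1⟩ : Zsqrtd (-1))) (dvd_sub hB hA)
    convert h using 1
    rw [hAdef, hBdef]
    ext <;> simp [pow_two, Zsqrtd.re_mul, Zsqrtd.im_mul] <;> ring
  have hY : δ ∣ (⟨0, 2⟩ : Zsqrtd (-1)) * ((k₃ * e ^ 2 : ℤ) : Zsqrtd (-1)) := by
    have h := dvd_sub hB hA
    convert h using 1
    rw [hAdef, hBdef]
    ext <;> simp [pow_two, Zsqrtd.re_mul, Zsqrtd.im_mul] <;> ring
  have h2i : δ ∣ (⟨0, 2⟩ : Zsqrtd (-1)) := by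
    have h := dvd_add (hX.mul_left ((a : ℤ) : Zsqrtd (-1))) (hY.mul_left ((b : ℤ) : Zsqrtd (-1)))
    convert h using 1
    have h1 : a * (l * m ^ 2) + b * (k₃ * e ^ 2) = 1 := by linear_combination hab
    ext <;> simp [pow_two, Zsqrtd.re_mul, Zsqrtd.im_mul] <;> nlinarith [h1]
  have hnormA : Zsqrtd.norm A =
      (l * m ^ 2) * (l * m ^ 2) + 2 * ((k₃ * e ^ 2) * (k₃ * e ^ 2) - (l * m ^ 2) * (k₃ * e ^ 2)) := by
    rw [hAdef, Zsqrtd.norm_def]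
    simp [pow_two, Zsqrtd.re_mul, Zsqrtd.im_mul]
    ring
  have hoddA : Odd (Zsqrtd.norm A) := by
    rw [hnormA]
    exact ((hl.mul (hm.pow)).mul (hl.mul (hm.pow))).add_even (even_two_mul _)
  have hdvdA : Zsqrtd.norm δ ∣ Zsqrtd.norm A := by
    obtain ⟨c, hc⟩ := hA
    exact ⟨Zsqrtd.norm c, by rw [hc, Zsqrtd.norm_mul]⟩
  have hdvd4 : Zsqrtd.norm δ ∣ 4 := by
    obtain ⟨c, hc⟩ := h2i
    refine ⟨Zsqrtd.norm c, ?_⟩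
    have h4' : Zsqrtd.norm (⟨0, 2⟩ : Zsqrtd (-1)) = 4 := by simp [Zsqrtd.norm_def]
    rw [← h4', hc, Zsqrtd.norm_mul]
  rw [← Zsqrtd.norm_eq_one_iff]
  set n : ℕ := (Zsqrtd.norm δ).natAbs with hn
  have hn4 : n ∣ 4 := by
    have := Int.natAbs_dvd_natAbs.mpr hdvd4
    simpa using this
  have hodd' : Odd (Zsqrtd.norm A).natAbs := Int.natAbs_odd.mpr hoddA
  have hdvdn : n ∣ (Zsqrtd.norm A).natAbs := Int.natAbs_dvd_natAbs.mpr hdvdA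
  have hnodd : Odd n := by
    rw [Nat.not_even_iff_odd.symm]
    intro hev
    exact (Nat.not_even_iff_odd.symm.mp hodd') (hev.two_dvd.trans hdvdn |>.elim fun c hc => ⟨c, by omega⟩)
  have hcop : Nat.Coprime n 4 := by
    have h2 : Nat.Coprime n 2 := hnodd.coprime_two_right
    simpa using h2.pow_right 2
  exact hcop.eq_one_of_dvd hn4
end

section
/- Suppose l ≡ m² ≡ k₃ ≡ 1 (mod 8) are integers, e ∈ ℤ, and κ₁, ν ∈ ℤ[√2] satisfy lm² + 2(1+√2)k₃e² = κ₁ν² with ν of odd norm. Then κ₁ is congruent to a unit times a square modulo 8 in ℤ[√2]; concretely κ₁ν² ≡ 1 or (1+√2)² (mod 8ℤ[√2]), and consequently the norm k₁ = Nκ₁ satisfies k₁ ≡ 1 (mod 16). -/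
/-!
Write `ε = 1 + √2`. The coordinates of `κ₁ν² = lm² + 2εk₃e²` are `lm² + 2k₃e²` and `2k₃e²`, and
`2e² ≡ 0` or `2 (mod 8)` according to the parity of `e`; so `κ₁ν² ≡ 1` or `1 + 2ε = ε² (mod 8)`.
Since `N(u + 2nz) = N u + 4n(…) + 4n² N z`, elements congruent mod `8` have norms congruent
mod `16`, whence `N(κ₁) N(ν)² ≡ N(ε²) = 1 (mod 16)`. Finally an odd norm `a² - 2b²` has `a` odd,
so it is `±1 (mod 8)` and its square is `1 (mod 16)`.
-/

open Zsqrtd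

local notation "ε" => (⟨1, 1⟩ : ℤ√2)

theorem Zsqrtd.intCast_dvd_sub_iff {d : ℤ} (n : ℕ) (x y : ℤ√d) :
    ((n : ℤ) : ℤ√d) ∣ x - y ↔ (x.re : ZMod n) = y.re ∧ (x.im : ZMod n) = y.im := by
  simp only [intCast_dvd, re_sub, im_sub, ← ZMod.intCast_zmod_eq_zero_iff_dvd, Int.cast_sub,
    sub_eq_zero]

theorem Zsqrtd.norm_modEq_of_dvd_sub {d n : ℤ} {x y : ℤ√d} (h : ((2 * n : ℤ) : ℤ√d) ∣ x - y) :
    x.norm ≡ y.norm [ZMOD 4 * n] := by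
  obtain ⟨z, hz⟩ := h
  obtain rfl : x = y + (2 * n : ℤ) * z := by rw [← hz, add_sub_cancel]
  refine (Int.modEq_iff_dvd.mpr ⟨y.re * z.re - d * y.im * z.im + n * z.norm, ?_⟩).symm
  simp only [norm_def, re_add, im_add, re_smul, im_smul]
  ring

theorem Int.sq_modEq_one_of_modEq_one_or_neg_one {n : ℤ} (h : n ≡ 1 [ZMOD 8] ∨ n ≡ -1 [ZMOD 8]) :
    n ^ 2 ≡ 1 [ZMOD 16] := by
  rcases h with h | h <;> obtain ⟨s, hs⟩ := Int.modEq_iff_dvd.mp h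
  · exact Int.modEq_iff_dvd.mpr ⟨s - 4 * s ^ 2, by linear_combination (1 + n - 8 * s) * hs⟩
  · exact Int.modEq_iff_dvd.mpr ⟨-s - 4 * s ^ 2, by linear_combination (n - 1 - 8 * s) * hs⟩

theorem Zsqrtd.norm_modEq_one_or_neg_one_of_odd {ν : ℤ√2} (h : Odd ν.norm) :
    ν.norm ≡ 1 [ZMOD 8] ∨ ν.norm ≡ -1 [ZMOD 8] := by
  obtain ⟨k, hk⟩ : Odd ν.re := by
    simpa [norm_def, Int.odd_sub, Int.odd_mul, parity_simps] using h
  have key : ∀ a b : ZMod 8, (2 * a + 1) * (2 * a + 1) - 2 * b * b = 1 ∨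
      (2 * a + 1) * (2 * a + 1) - 2 * b * b = -1 := by decide
  rw [norm_def, hk]
  rcases key k ν.im with h | h <;> [left; right] <;>
    exact (ZMod.intCast_eq_intCast_iff _ _ 8).mp (by push_cast; exact h)

theorem Zsqrtd.eight_dvd_sub_one_or_sub_sq_of_modEq {L K : ℤ} (hL : L ≡ 1 [ZMOD 8])
    (hK : K ≡ 1 [ZMOD 8]) (e : ℤ) :
    (8 : ℤ√2) ∣ L + 2 * ε * K * e ^ 2 - 1 ∨ (8 : ℤ√2) ∣ L + 2 * ε * K * e ^ 2 - ε ^ 2 := by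
  have hL8 : (L : ZMod 8) = 1 := by exact_mod_cast (ZMod.intCast_eq_intCast_iff L 1 8).mpr hL
  have hK8 : (K : ZMod 8) = 1 := by exact_mod_cast (ZMod.intCast_eq_intCast_iff K 1 8).mpr hK
  simp only [show (8 : ℤ√2) = ((8 : ℕ) : ℤ) by norm_num, intCast_dvd_sub_iff]
  have key : ∀ a : ZMod 8, (1 + 2 * a ^ 2 = 1 ∧ 2 * a ^ 2 = 0) ∨
      (1 + 2 * a ^ 2 = 3 ∧ 2 * a ^ 2 = 2) := by decide
  simpa [pow_two, hL8, hK8] using key e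

theorem Zsqrtd.norm_modEq_one_of_eight_dvd_sub {x : ℤ√2}
    (h : (8 : ℤ√2) ∣ x - 1 ∨ (8 : ℤ√2) ∣ x - ε ^ 2) :
    x.norm ≡ 1 [ZMOD 16] := by
  have h8 : (8 : ℤ√2) = ((2 * 4 : ℤ) : ℤ√2) := by norm_num
  rcases h with h | h <;> rw [h8] at h
  · simpa using norm_modEq_of_dvd_sub h
  · simpa [show (ε ^ 2).norm = 1 from rfl] using norm_modEq_of_dvd_sub h

/-- If `l ≡ m² ≡ k₃ ≡ 1 (mod 8)` and `lm² + 2(1+√2)k₃e² = κ₁ν²` in `ℤ[√2]` with `ν` of odd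
norm, then `κ₁ν² ≡ 1` or `(1+√2)² (mod 8)`, and the norm `k₁ = Nκ₁` satisfies
`k₁ ≡ 1 (mod 16)`. -/
theorem stmt13 (l m k₃ e : ℤ) (hl : l % 8 = 1) (hm : m ^ 2 % 8 = 1) (hk : k₃ % 8 = 1)
    (κ₁ ν : Zsqrtd 2) (hν : Odd ν.norm)
    (heq : ((l * m ^ 2 : ℤ) : Zsqrtd 2) + 2 * (⟨1, 1⟩ : Zsqrtd 2) * (k₃ : Zsqrtd 2) *
      ((e : Zsqrtd 2)) ^ 2 = κ₁ * ν ^ 2) :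
    ((8 : Zsqrtd 2) ∣ κ₁ * ν ^ 2 - 1 ∨
        (8 : Zsqrtd 2) ∣ κ₁ * ν ^ 2 - (⟨1, 1⟩ : Zsqrtd 2) ^ 2) ∧
      κ₁.norm % 16 = 1 := by
  have hlm : l * m ^ 2 ≡ 1 [ZMOD 8] := by
    rw [Int.ModEq, Int.mul_emod, hl, hm]; rfl
  have hcong := heq ▸ Zsqrtd.eight_dvd_sub_one_or_sub_sq_of_modEq hlm hk e
  have hν16 := Int.sq_modEq_one_of_modEq_one_or_neg_one (norm_modEq_one_or_neg_one_of_odd hν)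
  refine ⟨hcong, ?_⟩
  calc κ₁.norm = κ₁.norm * 1 := (mul_one _).symm
    _ ≡ κ₁.norm * ν.norm ^ 2 [ZMOD 16] := (Int.ModEq.refl _).mul hν16.symm
    _ = (κ₁ * ν ^ 2).norm := by simp only [Zsqrtd.norm_mul, sq]
    _ ≡ 1 [ZMOD 16] := Zsqrtd.norm_modEq_one_of_eight_dvd_sub hcong
end

section
/- Let E: y² = x(x² + ax + b) with a, b ∈ ℤ, and let P = (m/e², n/e³) be a rational point on E with m, n, e ∈ ℤ, gcd(m,e) = gcd(n,e) = 1. Write m = b₁m₁² with b₁ the squarefree kernel of m, and suppose b₁ | b. Then the torsor N² = b₁M⁴ + aM²e² + (b/b₁)e⁴ has the nontrivial primitive solution (N, M, e) = (n/(b₁m₁), m₁, e). -/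
/-- Let `P = (m/e², n/e³)` (in lowest terms, `m ≠ 0`) be a rational point on
`y² = x(x² + ax + b)`, so that `n² = m(m² + ame² + be⁴)`. Write `m = b₁m₁²` with `b₁` the
squarefree kernel of `m`, and suppose `b₁ ∣ b`, say `b = b₁b₂`. Then the torsor
`N² = b₁M⁴ + aM²e² + b₂e⁴` has the nontrivial primitive solution `(n/(b₁m₁), m₁, e)`. -/
theorem stmt15 (a b m n e b₁ m₁ b₂ : ℤ)
    (heq : n ^ 2 = m * (m ^ 2 + a * m * e ^ 2 + b * e ^ 4))
    (hme : IsCoprime m e) (hne : IsCoprime n e) (hm0 : m ≠ 0)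
    (hsq : Squarefree b₁) (hmfac : m = b₁ * m₁ ^ 2) (hb : b = b₁ * b₂) :
    ∃ N : ℤ, n = b₁ * m₁ * N ∧
      N ^ 2 = b₁ * m₁ ^ 4 + a * m₁ ^ 2 * e ^ 2 + b₂ * e ^ 4 ∧
      IsCoprime N e ∧ IsCoprime m₁ e ∧ ¬(N = 0 ∧ m₁ = 0 ∧ e = 0) := by
  subst hmfac hb
  have hm₁0 : m₁ ≠ 0 := by rintro rfl; simp at hm0
  have hb₁0 : b₁ ≠ 0 := by rintro rfl; simp at hm0
  set T : ℤ := b₁ * m₁ ^ 4 + a * m₁ ^ 2 * e ^ 2 + b₂ * e ^ 4 with hT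
  have key : n ^ 2 = (b₁ * m₁) ^ 2 * T := by rw [heq, hT]; ring
  have hdvd : b₁ * m₁ ∣ n := by
    rw [← Int.pow_dvd_pow_iff two_ne_zero]
    exact ⟨T, key⟩
  obtain ⟨N, hN⟩ := hdvd
  refine ⟨N, hN, ?_, ?_, ?_, ?_⟩
  · have h2 : (b₁ * m₁) ^ 2 * N ^ 2 = (b₁ * m₁) ^ 2 * T := by
      rw [← key, hN]; ring
    exact mul_left_cancel₀ (pow_ne_zero 2 (mul_ne_zero hb₁0 hm₁0)) h2
  · have := hne
    rw [hN] at this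
    exact this.of_mul_left_right
  · have := hme.of_mul_left_right
    exact (IsCoprime.pow_left_iff two_pos).mp this
  · rintro ⟨-, h, -⟩; exact hm₁0 h
end
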